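/- The function h(ν) = ψ(ν+3/2) - ψ(ν+2) + 1/(2(ν+1)) is strictly decreasing on (-1, ∞); moreover h(ν) → 0 as ν → ∞, hence h(ν) > 0 for all ν > -1. -/

import Mathlib

/-!
The recurrence `ψ(x + 1) = ψ(x) + 1 / x` turns `h(ν) - h(ν + 1)` into the rational function
`1 / (2 (ν + 1) (ν + 2) (2ν + 3))`, and the monotonicity of `ψ` (convexity of `log Γ`) squeezes
`h(ν)` to `0`. Telescoping then writes `h(ν)` as the sum of this rational function over
`ν, ν + 1, ν + 2, …`, whose terms are positive and strictly decreasing in `ν`.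
-/

open Real Filter

noncomputable def digamma (x : ℝ) : ℝ := deriv (fun y => Real.log (Real.Gamma y)) x

noncomputable def hDigamma (ν : ℝ) : ℝ :=
  digamma (ν + 3 / 2) - digamma (ν + 2) + 1 / (2 * (ν + 1))

open Set Topology

theorem Antitone.hasSum_sub_succ {u : ℕ → ℝ} (hu : Antitone u) (hlim : Tendsto u atTop (𝓝 0)) :
    HasSum (fun n => u n - u (n + 1)) (u 0) := by
  refine (hasSum_iff_tendsto_nat_of_nonneg (fun n => sub_nonneg.2 (hu n.le_succ)) _).2 ?_
  simp_rw [Finset.sum_range_sub']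
  simpa using hlim.const_sub (u 0)

lemma differentiableAt_log_Gamma {x : ℝ} (hx : 0 < x) :
    DifferentiableAt ℝ (fun y => Real.log (Real.Gamma y)) x := by
  have hne : ∀ m : ℕ, x ≠ -m := fun m h => by
    linarith [h ▸ hx, Nat.cast_nonneg (α := ℝ) m]
  exact (Real.differentiableAt_Gamma hne).log (Real.Gamma_ne_zero hne)

lemma digamma_add_one {x : ℝ} (hx : 0 < x) : digamma (x + 1) = digamma x + x⁻¹ := by
  unfold digamma
  rw [← deriv_comp_add_const, ← Real.deriv_log,
    ← deriv_fun_add (differentiableAt_log_Gamma hx) (Real.differentiableAt_log hx.ne')]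
  apply Filter.EventuallyEq.deriv_eq
  filter_upwards [eventually_gt_nhds hx] with y hy
  rw [Real.Gamma_add_one hy.ne', Real.log_mul hy.ne' (Real.Gamma_pos_of_pos hy).ne']
  ring

lemma digamma_monotoneOn : MonotoneOn digamma (Ioi 0) :=
  Real.convexOn_log_Gamma.monotoneOn_deriv fun _ hx => differentiableAt_log_Gamma hx

lemma abs_hDigamma_le {ν : ℝ} (hν : -1 < ν) : |hDigamma ν| ≤ 1 / (2 * (ν + 1)) := by
  have hx : 0 < ν + 1 := by linarith
  have hlow : digamma (ν + 1) ≤ digamma (ν + 3 / 2) :=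
    digamma_monotoneOn hx (show (0 : ℝ) < ν + 3 / 2 by linarith) (by linarith)
  have hup : digamma (ν + 3 / 2) ≤ digamma (ν + 2) :=
    digamma_monotoneOn (show (0 : ℝ) < ν + 3 / 2 by linarith) (show (0 : ℝ) < ν + 2 by linarith)
      (by linarith)
  have hrec : digamma (ν + 2) = digamma (ν + 1) + 1 / (ν + 1) := by
    rw [show ν + 2 = ν + 1 + 1 by ring, digamma_add_one hx, one_div]
  have hhalf : 1 / (ν + 1) = 2 * (1 / (2 * (ν + 1))) := by field_simp
  unfold hDigamma
  rw [abs_le]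
  constructor <;> linarith

lemma tendsto_hDigamma_atTop : Tendsto hDigamma atTop (𝓝 0) := by
  have hbound : Tendsto (fun ν : ℝ => 1 / (2 * (ν + 1))) atTop (𝓝 0) :=
    tendsto_const_nhds.div_atTop
      (Tendsto.const_mul_atTop two_pos (tendsto_atTop_add_const_right _ 1 tendsto_id))
  refine squeeze_zero_norm' ?_ hbound
  filter_upwards [eventually_gt_atTop (-1 : ℝ)] with ν hν
  exact abs_hDigamma_le hν

noncomputable def hDigammaDiff (ν : ℝ) : ℝ := 1 / (2 * (ν + 1) * (ν + 2) * (2 * ν + 3))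

lemma hDigammaDiff_pos {ν : ℝ} (hν : -1 < ν) : 0 < hDigammaDiff ν := by
  unfold hDigammaDiff
  have : 0 < 2 * ν + 3 := by linarith
  have : 0 < ν + 2 := by linarith
  have : 0 < ν + 1 := by linarith
  positivity

lemma hDigammaDiff_strictAntiOn : StrictAntiOn hDigammaDiff (Ioi (-1)) := by
  intro a (ha : -1 < a) b (_ : -1 < b) hab
  have : 0 < a + 1 := by linarith
  have : 0 < a + 2 := by linarith
  have : 0 < 2 * a + 3 := by linarith
  unfold hDigammaDiff
  apply one_div_lt_one_div_of_lt (by positivity)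
  gcongr

lemma hDigamma_sub_hDigamma_add_one {ν : ℝ} (hν : -1 < ν) :
    hDigamma ν - hDigamma (ν + 1) = hDigammaDiff ν := by
  have : 2 * ν + 3 ≠ 0 := by linarith
  have : ν + 2 ≠ 0 := by linarith
  have : ν + 1 ≠ 0 := by linarith
  unfold hDigamma hDigammaDiff
  rw [show ν + 1 + 3 / 2 = ν + 3 / 2 + 1 by ring, show ν + 1 + 2 = ν + 2 + 1 by ring,
    digamma_add_one (by linarith), digamma_add_one (by linarith),
    show ν + 3 / 2 = (2 * ν + 3) / 2 by ring, show ν + 1 + 1 = ν + 2 by ring]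
  field_simp
  ring

lemma hasSum_hDigamma {ν : ℝ} (hν : -1 < ν) :
    HasSum (fun n : ℕ => hDigammaDiff (ν + n)) (hDigamma ν) := by
  have hshift : ∀ n : ℕ, -1 < ν + n := fun n => by linarith [Nat.cast_nonneg (α := ℝ) n]
  have hstep : ∀ n : ℕ, hDigamma (ν + n) - hDigamma (ν + ↑(n + 1)) = hDigammaDiff (ν + n) :=
    fun n => by rw [Nat.cast_succ, ← add_assoc, hDigamma_sub_hDigamma_add_one (hshift n)]
  have hanti : Antitone fun n : ℕ => hDigamma (ν + n) :=
    antitone_nat_of_succ_le fun n => by linarith [hstep n, hDigammaDiff_pos (hshift n)]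
  have hlim : Tendsto (fun n : ℕ => hDigamma (ν + n)) atTop (𝓝 0) :=
    tendsto_hDigamma_atTop.comp (tendsto_atTop_add_const_left _ ν tendsto_natCast_atTop_atTop)
  simpa only [hstep, Nat.cast_zero, add_zero] using hanti.hasSum_sub_succ hlim

theorem hDigamma_strictAnti_tendsto_pos :
    StrictAntiOn hDigamma (Set.Ioi (-1 : ℝ)) ∧
    Tendsto hDigamma atTop (nhds 0) ∧
    ∀ ν : ℝ, -1 < ν → 0 < hDigamma ν := by
  have hshift : ∀ {ν : ℝ}, -1 < ν → ∀ n : ℕ, ν + n ∈ Ioi (-1) := fun hν n => by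
    simp only [mem_Ioi]; linarith [Nat.cast_nonneg (α := ℝ) n]
  refine ⟨fun a ha b hb hab => ?_, tendsto_hDigamma_atTop, fun ν hν => ?_⟩
  · have hterm : ∀ n : ℕ, hDigammaDiff (b + n) < hDigammaDiff (a + n) := fun n =>
      hDigammaDiff_strictAntiOn (hshift ha n) (hshift hb n) (by linarith)
    exact hasSum_lt (fun n => (hterm n).le) (hterm 0) (hasSum_hDigamma hb) (hasSum_hDigamma ha)
  · exact hasSum_lt (fun n => (hDigammaDiff_pos (hshift hν n)).le)
      (hDigammaDiff_pos (hshift hν 0)) hasSum_zero (hasSum_hDigamma hν)
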